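/- Let $F(\mathbf{x}) = A_1 x_1^2 + A_2 x_2^2 + A_3 x_3^2 + A_4 x_4^2$ with integer coefficients $A_i$ and let $\Delta_F = A_1 A_2 A_3 A_4 \neq 0$. Let $p$ be an odd prime dividing $\Delta_F$ exactly to the first power (i.e., $v_p(\Delta_F) = 1$). Then for every $r \geq 1$, the complete exponential sum $S_{p^r}(\mathbf{0}) = \sum_{a \bmod p^r,\ (a,p)=1} \sum_{\mathbf{b} \bmod p^r} e_{p^r}(a F(\mathbf{b}))$ vanishes. -/

import Mathlib

/-- `e_q(t) = exp(2πit/q)`. -/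
noncomputable def eq' (q : ℕ) (t : ℤ) : ℂ :=
  Complex.exp (2 * Real.pi * Complex.I * (t : ℂ) / (q : ℂ))

open Finset Complex

lemma eq'_eq (q : ℕ) (t : ℤ) : eq' q t = Complex.exp (2 * Real.pi * Complex.I / q * t) := by
  rw [eq']; ring_nf

lemma eq'_add (q : ℕ) (s t : ℤ) : eq' q (s + t) = eq' q s * eq' q t := by
  simp only [eq'_eq, ← Complex.exp_add]; push_cast; ring_nf

lemma eq'_zero (q : ℕ) : eq' q 0 = 1 := by simp [eq']

lemma eq'_sum {ι : Type*} (q : ℕ) (s : Finset ι) (f : ι → ℤ) :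
    eq' q (∑ i ∈ s, f i) = ∏ i ∈ s, eq' q (f i) := by
  classical
  induction s using Finset.induction with
  | empty => simp [eq'_zero]
  | @insert a s h ih => rw [Finset.sum_insert h, Finset.prod_insert h, eq'_add, ih]

lemma eq'_eq_one_iff {q : ℕ} (hq : q ≠ 0) (t : ℤ) : eq' q t = 1 ↔ (q : ℤ) ∣ t := by
  rw [eq'_eq, Complex.exp_eq_one_iff]
  have hq' : (q : ℂ) ≠ 0 := Nat.cast_ne_zero.mpr hq
  have h2 : (2 * (Real.pi : ℂ) * Complex.I) ≠ 0 := by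
    simp [Real.pi_ne_zero, Complex.I_ne_zero]
  constructor
  · rintro ⟨n, hn⟩
    have ht : (t : ℂ) = n * q := by
      have key : (2 * (Real.pi : ℂ) * I) * t = (2 * (Real.pi : ℂ) * I) * (n * q) := by
        have hq2 : (q : ℂ) ≠ 0 := hq'
        field_simp at hn
        linear_combination (2 * (Real.pi : ℂ) * I) * hn
      exact mul_left_cancel₀ h2 key
    have : t = n * q := by exact_mod_cast ht
    exact ⟨n, by linarith⟩
  · rintro ⟨n, rfl⟩
    exact ⟨n, by push_cast; field_simp⟩

lemma eq'_dvd {q : ℕ} (hq : q ≠ 0) {t : ℤ} (h : (q : ℤ) ∣ t) : eq' q t = 1 :=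
  (eq'_eq_one_iff hq t).mpr h

lemma eq'_congr {q : ℕ} (hq : q ≠ 0) {s t : ℤ} (h : (q : ℤ) ∣ s - t) : eq' q s = eq' q t := by
  have : eq' q (t + (s - t)) = eq' q t * eq' q (s - t) := eq'_add q t (s - t)
  rw [eq'_dvd hq h, mul_one] at this
  simpa using this

lemma eq'_nat_mul (q : ℕ) (c : ℤ) (x : ℕ) : eq' q (c * x) = eq' q c ^ x := by
  rw [eq'_eq, eq'_eq, ← Complex.exp_nat_mul]
  congr 1; push_cast; ring

lemma eq'_geom {q : ℕ} (hq : q ≠ 0) (c : ℤ) :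
    ∑ x ∈ Finset.range q, eq' q (c * x) = if (q : ℤ) ∣ c then (q : ℂ) else 0 := by
  by_cases h : (q : ℤ) ∣ c
  · simp only [if_pos h]
    rw [Finset.sum_congr rfl (fun x _ => eq'_dvd hq (Dvd.dvd.mul_right h _))]
    simp
  · simp only [if_neg h]
    have hz : eq' q c ≠ 1 := fun hc => h ((eq'_eq_one_iff hq c).mp hc)
    simp only [eq'_nat_mul]
    rw [geom_sum_eq hz]
    have : eq' q c ^ q = 1 := by
      rw [← eq'_nat_mul, mul_comm]
      exact eq'_dvd hq ⟨c, rfl⟩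
    simp [this]

lemma sum_range_mul_split {M : Type*} [AddCommMonoid M] (f : ℕ → M) (a b : ℕ) :
    ∑ x ∈ Finset.range (a * b), f x = ∑ z ∈ Finset.range b, ∑ y ∈ Finset.range a, f (y + a * z) := by
  induction b with
  | zero => simp
  | succ b ih =>
    rw [Nat.mul_succ]
    have split : ∑ x ∈ Finset.range (a*b + a), f x
        = ∑ x ∈ Finset.range (a*b), f x + ∑ y ∈ Finset.range a, f (a*b + y) := by
      have h := Finset.sum_Ico_consecutive f (Nat.zero_le (a*b)) (Nat.le_add_right (a*b) a)
      rw [← Finset.range_eq_Ico, ← Finset.range_eq_Ico] at h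
      rw [← h]
      congr 1
      rw [Finset.sum_Ico_eq_sum_range, Nat.add_sub_cancel_left]
    rw [split, ih, Finset.sum_range_succ]
    congr 1
    exact Finset.sum_congr rfl fun y _ => by rw [Nat.add_comm]

lemma sum_range_mul_periodic (f : ℕ → ℂ) (a b : ℕ) (hf : ∀ x, f (x + a) = f x) :
    ∑ x ∈ Finset.range (a * b), f x = b * ∑ x ∈ Finset.range a, f x := by
  have key : ∀ z x, f (x + a * z) = f x := by
    intro z
    induction z with
    | zero => simp
    | succ z ih => intro x; rw [Nat.mul_succ, ← Nat.add_assoc]; rw [hf (x + a*z)] at *; exact ih x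
  rw [sum_range_mul_split]
  rw [Finset.sum_congr rfl fun z _ => Finset.sum_congr rfl fun y _ => key z y]
  simp [Finset.sum_const, mul_comm]

lemma eq'_shift {p : ℕ} (hp : p ≠ 0) (j d : ℕ) (t : ℤ) :
    eq' (p ^ (j + d)) ((p : ℤ) ^ j * t) = eq' (p ^ d) t := by
  rw [eq'_eq, eq'_eq]
  congr 1
  have h1 : ((p : ℂ)) ≠ 0 := Nat.cast_ne_zero.mpr hp
  have h2 : ((p : ℂ)) ^ j ≠ 0 := pow_ne_zero _ h1
  have h3 : ((p : ℂ)) ^ d ≠ 0 := pow_ne_zero _ h1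
  push_cast
  rw [pow_add]
  field_simp

/-- The one-variable Gauss-type sum at modulus `p^k`. -/
noncomputable def Gs (p : ℕ) (m : ℤ) (k : ℕ) : ℂ :=
  ∑ x ∈ Finset.range (p ^ k), eq' (p ^ k) (m * (x : ℤ) ^ 2)

lemma Gs_zero (p : ℕ) (m : ℤ) : Gs p m 0 = 1 := by
  simp [Gs, eq'_zero]

lemma Gs_p {p : ℕ} (hp : p ≠ 0) (m : ℤ) (k : ℕ) :
    Gs p ((p : ℤ) * m) (k + 1) = p * Gs p m k := by
  have hpk : p ^ k ≠ 0 := pow_ne_zero _ hp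
  have step : ∀ x : ℕ, eq' (p ^ (k+1)) ((p : ℤ) * m * (x : ℤ) ^ 2) = eq' (p ^ k) (m * (x : ℤ) ^ 2) := by
    intro x
    have := eq'_shift hp 1 k (m * (x : ℤ) ^ 2)
    simpa [mul_assoc, Nat.add_comm] using this
  rw [Gs, Finset.sum_congr rfl fun x _ => step x]
  have hper : ∀ x : ℕ, eq' (p ^ k) (m * ((x + p ^ k : ℕ) : ℤ) ^ 2) = eq' (p ^ k) (m * (x : ℤ) ^ 2) := by
    intro x
    apply eq'_congr (by exact_mod_cast hpk)
    push_cast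
    exact ⟨m * 2 * x + m * p ^ k, by ring⟩
  have : (p : ℕ) ^ (k + 1) = p ^ k * p := by ring
  rw [this, sum_range_mul_periodic _ _ _ hper, Gs]

lemma Gs_rec {p : ℕ} (hp : p.Prime) (hodd : p ≠ 2) {m : ℤ} (hm : ¬ (p : ℤ) ∣ m) (d : ℕ) :
    Gs p m (d + 2) = p * Gs p m d := by
  have hp0 : p ≠ 0 := hp.ne_zero
  have hpk0 : ∀ j : ℕ, (p : ℕ) ^ j ≠ 0 := fun j => pow_ne_zero _ hp0
  set N : ℕ := p ^ (d + 1) with hN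
  have hsplit : (p : ℕ) ^ (d + 2) = N * p := by rw [hN]; ring
  have hsum := sum_range_mul_split (fun x => eq' (p^(d+2)) (m * (x:ℤ)^2)) N p
  rw [← hsplit] at hsum
  rw [Gs, hsum]
  -- expand the square
  have hterm : ∀ y z : ℕ, eq' (p ^ (d+2)) (m * ((y + N * z : ℕ) : ℤ) ^ 2)
      = eq' (p ^ (d+2)) (m * (y:ℤ)^2) * eq' p ((2 * m * y) * z) := by
    intro y z
    have e1 : (m * ((y + N * z : ℕ) : ℤ) ^ 2)
        = m * (y:ℤ)^2 + (p:ℤ)^(d+1) * ((2 * m * y) * z) + (p:ℤ)^(d+2) * ((p:ℤ)^d * (m * z^2)) := by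
      push_cast [hN]
      ring
    rw [e1, eq'_add, eq'_add]
    have hd : (((p^(d+2) : ℕ)) : ℤ) ∣ (p:ℤ)^(d+2) * ((p:ℤ)^d * (m * z^2)) := by
      push_cast; exact Dvd.intro _ rfl
    rw [eq'_dvd (hpk0 (d+2)) hd, mul_one]
    congr 1
    have := eq'_shift hp0 (d+1) 1 ((2 * m * y) * z)
    rw [pow_one] at this
    rw [show d + 1 + 1 = d + 2 from rfl] at this
    exact this
  rw [Finset.sum_congr rfl fun z _ => Finset.sum_congr rfl fun y _ => hterm y z]
  rw [Finset.sum_comm]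
  have hinner : ∀ y : ℕ, ∑ z ∈ Finset.range p, eq' (p ^ (d+2)) (m * (y:ℤ)^2) * eq' p ((2 * m * y) * z)
      = eq' (p ^ (d+2)) (m * (y:ℤ)^2) * (if (p:ℤ) ∣ (2 * m * y) then (p:ℂ) else 0) := by
    intro y
    rw [← Finset.mul_sum, eq'_geom hp0]
  rw [Finset.sum_congr rfl fun y _ => hinner y]
  -- divisibility condition
  have hp2 : ¬ (p:ℤ) ∣ 2 := by
    intro h
    have h2 : (p:ℤ) ≤ 2 := Int.le_of_dvd (by norm_num) h
    have h3 : 2 ≤ p := hp.two_le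
    have : p = 2 := by omega
    exact hodd this
  have hdvd2 : ¬ (p:ℤ) ∣ 2 * m := fun h => (Int.Prime.dvd_mul' hp h).elim hp2 hm
  have hcond : ∀ y : ℕ, ((p:ℤ) ∣ (2 * m * y)) ↔ (p ∣ y) := by
    intro y
    constructor
    · intro h
      rcases Int.Prime.dvd_mul' hp h with h' | h'
      · exact absurd h' hdvd2
      · exact_mod_cast h'
    · intro h
      exact Dvd.dvd.mul_left (by exact_mod_cast h) _
  -- rewrite condition and collapse the if
  have hsum2 : ∑ y ∈ Finset.range N, (eq' (p ^ (d+2)) (m * (y:ℤ)^2) * if (p:ℤ) ∣ (2 * m * y) then (p:ℂ) else 0)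
      = ∑ y ∈ Finset.range N, (if p ∣ y then (p:ℂ) * eq' (p ^ (d+2)) (m * (y:ℤ)^2) else 0) := by
    refine Finset.sum_congr rfl fun y _ => ?_
    by_cases hy : p ∣ y
    · rw [if_pos ((hcond y).mpr hy), if_pos hy, mul_comm]
    · rw [if_neg (fun h => hy ((hcond y).mp h)), if_neg hy, mul_zero]
  rw [hsum2, ← Finset.sum_filter]
  -- reindex the filtered sum by y = p * w
  have hbij : ∑ y ∈ (Finset.range N).filter (fun y => p ∣ y), (p:ℂ) * eq' (p ^ (d+2)) (m * (y:ℤ)^2)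
      = ∑ w ∈ Finset.range (p ^ d), (p:ℂ) * eq' (p ^ (d+2)) (m * ((p * w : ℕ):ℤ)^2) := by
    refine Finset.sum_nbij' (fun y => y / p) (fun w => p * w) ?_ ?_ ?_ ?_ ?_
    · intro y hy
      simp only [Finset.mem_filter, Finset.mem_range] at hy
      simp only [Finset.mem_range]
      rcases hy.2 with ⟨c, rfl⟩
      rw [Nat.mul_div_cancel_left _ hp.pos]
      have hlt : p * c < p * p ^ d := by
        calc p * c < N := hy.1
        _ = p * p ^ d := by rw [hN]; ring
      exact lt_of_mul_lt_mul_left hlt (Nat.zero_le p)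
    · intro w hw
      simp only [Finset.mem_range] at hw
      simp only [Finset.mem_filter, Finset.mem_range]
      constructor
      · rw [hN]
        calc p * w < p * p ^ d := (Nat.mul_lt_mul_left hp.pos).mpr hw
        _ = p ^ (d+1) := by ring
      · exact Dvd.intro _ rfl
    · intro y hy
      simp only [Finset.mem_filter] at hy
      exact Nat.mul_div_cancel' hy.2
    · intro w _
      exact Nat.mul_div_cancel_left _ hp.pos
    · intro y hy
      simp only [Finset.mem_filter] at hy
      rw [Nat.mul_div_cancel' hy.2]
  rw [hbij]
  -- strip p^2 from each term
  have hstrip : ∀ w : ℕ, eq' (p ^ (d+2)) (m * ((p * w : ℕ):ℤ)^2) = eq' (p ^ d) (m * (w:ℤ)^2) := by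
    intro w
    have := eq'_shift hp0 2 d (m * (w:ℤ)^2)
    rw [show (2:ℕ) + d = d + 2 from by ring] at this
    rw [← this]
    congr 1
    push_cast
    ring
  rw [Finset.sum_congr rfl fun w _ => by rw [hstrip w]]
  rw [← Finset.mul_sum, Gs]

lemma Gs_even {p : ℕ} (hp : p.Prime) (hodd : p ≠ 2) {m : ℤ} (hm : ¬ (p : ℤ) ∣ m) (j : ℕ) :
    Gs p m (2 * j) = (p : ℂ) ^ j := by
  induction j with
  | zero => simpa using Gs_zero p m
  | succ j ih =>
    have : 2 * (j + 1) = 2 * j + 2 := by ring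
    rw [this, Gs_rec hp hodd hm, ih]
    ring

lemma Gs_odd {p : ℕ} (hp : p.Prime) (hodd : p ≠ 2) {m : ℤ} (hm : ¬ (p : ℤ) ∣ m) (j : ℕ) :
    Gs p m (2 * j + 1) = (p : ℂ) ^ j * Gs p m 1 := by
  induction j with
  | zero => simp
  | succ j ih =>
    have : 2 * (j + 1) + 1 = (2 * j + 1) + 2 := by ring
    rw [this, Gs_rec hp hodd hm, ih]
    ring

section Level1

variable (p : ℕ) [Fact p.Prime]

/-- The additive-character value on `ZMod p`. -/
noncomputable def Ep (t : ZMod p) : ℂ := eq' p (t.val : ℤ)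

/-- Complex-valued quadratic character. -/
noncomputable def qc (t : ZMod p) : ℂ := ((quadraticChar (ZMod p) t : ℤ) : ℂ)

/-- The twisted Gauss sum at level one. -/
noncomputable def Tp : ℂ := ∑ t : ZMod p, qc p t * Ep p t

variable {p}

lemma eq'_eq_Ep (t : ℤ) : eq' p t = Ep p (t : ZMod p) := by
  have hp0 : p ≠ 0 := (Fact.out : p.Prime).ne_zero
  haveI : NeZero p := ⟨hp0⟩
  rw [Ep]
  apply eq'_congr hp0
  have hv : (((t : ZMod p).val : ℤ)) = t % p := ZMod.val_intCast t
  rw [hv]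
  exact ⟨t / p, by rw [Int.emod_def]; ring⟩

lemma sum_range_eq_sum_zmod (f : ZMod p → ℂ) :
    ∑ x ∈ Finset.range p, f (x : ZMod p) = ∑ t : ZMod p, f t := by
  have hp0 : p ≠ 0 := (Fact.out : p.Prime).ne_zero
  haveI : NeZero p := ⟨hp0⟩
  refine Finset.sum_nbij' (fun x => (x : ZMod p)) (fun t => t.val) ?_ ?_ ?_ ?_ ?_
  · intro x _; exact Finset.mem_univ _
  · intro t _; exact Finset.mem_range.mpr (ZMod.val_lt t)
  · intro x hx
    exact ZMod.val_cast_of_lt (Finset.mem_range.mp hx)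
  · intro t _; simp [ZMod.natCast_val, ZMod.cast_id]
  · intro x _; rfl

end Level1

section Level1b

variable {p : ℕ} [Fact p.Prime]

lemma qc_mul (a b : ZMod p) : qc p (a * b) = qc p a * qc p b := by
  rw [qc, qc, qc, map_mul]
  push_cast
  ring

lemma qc_sq_one {a : ZMod p} (ha : a ≠ 0) : qc p a * qc p a = 1 := by
  rw [qc, ← Int.cast_mul, ← sq, quadraticChar_sq_one ha, Int.cast_one]

lemma qc_inv (a : ZMod p) (ha : a ≠ 0) : qc p a⁻¹ = qc p a := by
  have h1 : qc p a⁻¹ * qc p a = 1 := by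
    rw [← qc_mul, inv_mul_cancel₀ ha]
    simp [qc]
  have h2 : qc p a * qc p a = 1 := qc_sq_one ha
  have ha' : qc p a ≠ 0 := by
    intro h
    rw [h, mul_zero] at h2
    exact one_ne_zero h2.symm
  calc qc p a⁻¹ = qc p a⁻¹ * (qc p a * qc p a) := by rw [h2, mul_one]
  _ = (qc p a⁻¹ * qc p a) * qc p a := by ring
  _ = qc p a := by rw [h1, one_mul]

lemma sum_Ep_zero (hp2 : p ≠ 2) : ∑ t : ZMod p, Ep p t = 0 := by
  have hp : p.Prime := Fact.out
  rw [← sum_range_eq_sum_zmod (fun t => Ep p t)]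
  have : ∀ x : ℕ, Ep p ((x : ZMod p)) = eq' p (1 * (x : ℕ)) := by
    intro x
    rw [one_mul, eq'_eq_Ep (x : ℤ)]
    norm_cast
  rw [Finset.sum_congr rfl fun x _ => this x]
  rw [eq'_geom hp.ne_zero 1]
  rw [if_neg]
  intro h
  have := Int.le_of_dvd (by norm_num) h
  have := hp.two_le
  omega

lemma sum_sq_eval (f : ZMod p → ℂ) (hp2 : p ≠ 2) :
    ∑ x : ZMod p, f (x ^ 2) = ∑ a : ZMod p, (1 + qc p a) * f a := by
  have hchar : ringChar (ZMod p) ≠ 2 := by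
    rw [ZMod.ringChar_zmod_n]; exact hp2
  classical
  rw [← Finset.sum_fiberwise' Finset.univ (fun x : ZMod p => x ^ 2) f]
  refine Finset.sum_congr rfl fun a _ => ?_
  rw [Finset.sum_const]
  have hcard : ({x : ZMod p | x ^ 2 = a}.toFinset.card : ℤ) = quadraticChar (ZMod p) a + 1 :=
    quadraticChar_card_sqrts hchar a
  have hset : {x : ZMod p | x ^ 2 = a}.toFinset = Finset.univ.filter (fun x => x ^ 2 = a) := by
    ext x; simp
  rw [hset] at hcard
  have : ((Finset.univ.filter (fun x : ZMod p => x ^ 2 = a)).card : ℂ) = 1 + qc p a := by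
    rw [qc]
    have := congrArg (fun z : ℤ => (z : ℂ)) hcard
    push_cast at this ⊢
    rw [this]; ring
  rw [nsmul_eq_mul, this]

end Level1b

lemma Gs_one_eval {p : ℕ} (hp : p.Prime) (hodd : p ≠ 2) {m : ℤ} (hm : ¬ (p : ℤ) ∣ m) :
    Gs p m 1 = (by haveI := Fact.mk hp; exact qc p (m : ZMod p) * Tp p) := by
  haveI := Fact.mk hp
  have hm0 : (m : ZMod p) ≠ 0 := by
    rw [Ne, ZMod.intCast_zmod_eq_zero_iff_dvd]; exact hm
  have step1 : Gs p m 1 = ∑ t : ZMod p, Ep p ((m : ZMod p) * t ^ 2) := by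
    rw [Gs, pow_one]
    have : ∀ x : ℕ, eq' p (m * (x : ℤ) ^ 2) = Ep p ((m : ZMod p) * ((x : ZMod p)) ^ 2) := by
      intro x
      rw [eq'_eq_Ep]
      congr 1
      push_cast
      ring
    rw [Finset.sum_congr rfl fun x _ => this x]
    exact sum_range_eq_sum_zmod (fun t => Ep p ((m : ZMod p) * t ^ 2))
  rw [step1, sum_sq_eval (fun a => Ep p ((m : ZMod p) * a)) hodd]
  have expand : ∑ a : ZMod p, (1 + qc p a) * Ep p ((m : ZMod p) * a)
      = ∑ a : ZMod p, Ep p ((m : ZMod p) * a) + ∑ a : ZMod p, qc p a * Ep p ((m : ZMod p) * a) := by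
    rw [← Finset.sum_add_distrib]
    exact Finset.sum_congr rfl fun a _ => by ring
  rw [expand]
  have h1 : ∑ a : ZMod p, Ep p ((m : ZMod p) * a) = 0 := by
    rw [Fintype.sum_bijective (fun a : ZMod p => (m : ZMod p) * a)
      (mulLeft_bijective₀ _ hm0) _ (fun t => Ep p t) (fun a => rfl)]
    exact sum_Ep_zero hodd
  have h2 : ∑ a : ZMod p, qc p a * Ep p ((m : ZMod p) * a) = qc p (m : ZMod p) * Tp p := by
    rw [Fintype.sum_bijective (fun a : ZMod p => (m : ZMod p) * a)
      (mulLeft_bijective₀ _ hm0) _ (fun t => qc p ((m : ZMod p)⁻¹ * t) * Ep p t)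
      (fun a => by simp [inv_mul_cancel_left₀ hm0])]
    rw [Tp, Finset.mul_sum]
    refine Finset.sum_congr rfl fun t _ => ?_
    rw [qc_mul, qc_inv _ hm0]
    ring
  rw [h1, h2, zero_add]

lemma char_sum_zero {p : ℕ} (hp : p.Prime) (hodd : p ≠ 2) {r : ℕ} (hr : 1 ≤ r) :
    (by haveI := Fact.mk hp
        exact ∑ a ∈ (Finset.range (p^r)).filter (fun a => Nat.gcd a (p^r) = 1),
          qc p ((a : ℕ) : ZMod p) = 0) := by
  haveI := Fact.mk hp
  have hchar : ringChar (ZMod p) ≠ 2 := by rw [ZMod.ringChar_zmod_n]; exact hodd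
  have hgcd : ∀ a : ℕ, Nat.gcd a (p^r) = 1 ↔ ¬ p ∣ a := by
    intro a
    have h1 : Nat.Coprime a (p^r) ↔ Nat.Coprime a p := Nat.coprime_pow_right_iff hr a p
    rw [show (Nat.gcd a (p^r) = 1) = Nat.Coprime a (p^r) from rfl, h1, Nat.coprime_comm]
    exact hp.coprime_iff_not_dvd
  -- the summand vanishes off the filter
  have hdrop : ∑ a ∈ (Finset.range (p^r)).filter (fun a => Nat.gcd a (p^r) = 1),
      qc p ((a : ℕ) : ZMod p) = ∑ a ∈ Finset.range (p^r), qc p ((a : ℕ) : ZMod p) := by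
    refine Finset.sum_filter_of_ne ?_
    intro a _ hne
    rw [hgcd]
    intro hdvd
    apply hne
    have : ((a : ℕ) : ZMod p) = 0 := (ZMod.natCast_eq_zero_iff a p).mpr hdvd
    rw [this, qc]
    simp
  rw [hdrop]
  have hper : ∀ a : ℕ, qc p (((a + p : ℕ)) : ZMod p) = qc p ((a : ℕ) : ZMod p) := by
    intro a; push_cast; simp
  have hsplit : (p : ℕ) ^ r = p * p ^ (r - 1) := by
    conv_lhs => rw [show r = 1 + (r-1) from by omega]
    ring
  rw [hsplit, sum_range_mul_periodic _ _ _ hper]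
  have : ∑ x ∈ Finset.range p, qc p ((x : ℕ) : ZMod p) = ∑ t : ZMod p, qc p t :=
    sum_range_eq_sum_zmod (qc p)
  rw [this]
  have : ∑ t : ZMod p, qc p t = ((∑ t : ZMod p, quadraticChar (ZMod p) t : ℤ) : ℂ) := by
    simp only [qc]; push_cast; rfl
  rw [this, quadraticChar_sum_zero hchar]
  simp

/-- The complete exponential sum `S_q(c)` attached to the diagonal quadratic form
`F(x) = ∑ A i * x i ^ 2`. -/
noncomputable def Sq (A c : Fin 4 → ℤ) (q : ℕ) : ℂ :=
  ∑ a ∈ (Finset.range q).filter (fun a => Nat.gcd a q = 1),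
    ∑ b ∈ Fintype.piFinset (fun _ : Fin 4 => Finset.range q),
      eq' q ((a : ℤ) * (∑ i, A i * ((b i : ℤ)) ^ 2) + ∑ i, (b i : ℤ) * c i)

lemma Sq_factor (A : Fin 4 → ℤ) (p r : ℕ) :
    Sq A 0 (p ^ r) = ∑ a ∈ (Finset.range (p^r)).filter (fun a => Nat.gcd a (p^r) = 1),
      ∏ i, Gs p ((a : ℤ) * A i) r := by
  rw [Sq]
  refine Finset.sum_congr rfl fun a _ => ?_
  have hterm : ∀ b : Fin 4 → ℕ,
      eq' (p^r) ((a : ℤ) * (∑ i, A i * ((b i : ℤ)) ^ 2) + ∑ i, (b i : ℤ) * (0 : Fin 4 → ℤ) i)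
      = ∏ i, eq' (p^r) (((a : ℤ) * A i) * ((b i : ℤ)) ^ 2) := by
    intro b
    have harg : (a : ℤ) * (∑ i, A i * ((b i : ℤ)) ^ 2) + ∑ i, (b i : ℤ) * (0 : Fin 4 → ℤ) i
        = ∑ i, ((a : ℤ) * A i) * ((b i : ℤ)) ^ 2 := by
      simp only [Pi.zero_apply, mul_zero, Finset.sum_const_zero, add_zero, Finset.mul_sum]
      exact Finset.sum_congr rfl fun i _ => (mul_assoc _ _ _).symm
    rw [harg, eq'_sum]
  rw [Finset.sum_congr rfl fun b _ => hterm b]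
  rw [Finset.sum_prod_piFinset (Finset.range (p^r))
    (fun (i : Fin 4) (x : ℕ) => eq' (p^r) (((a : ℤ) * A i) * ((x : ℤ)) ^ 2))]
  rfl

theorem stmt_5 (A : Fin 4 → ℤ) (hA : ∀ i, A i ≠ 0) (p : ℕ) (hp : p.Prime) (hodd : p ≠ 2)
    (hdvd : (p : ℤ) ∣ ∏ i, A i) (hsq : ¬ ((p : ℤ) ^ 2 ∣ ∏ i, A i)) :
    ∀ r : ℕ, 1 ≤ r → Sq A 0 (p ^ r) = 0 := by
  intro r hr
  haveI := Fact.mk hp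
  classical
  have hpZ : Prime ((p : ℕ) : ℤ) := Nat.prime_iff_prime_int.mp hp
  obtain ⟨i₀, -, hAi₀⟩ := hpZ.exists_mem_finset_dvd hdvd
  -- the other coefficients are not divisible by p
  have hothers : ∀ j, j ≠ i₀ → ¬ (p : ℤ) ∣ A j := by
    intro j hj hdvdj
    apply hsq
    have hprod : ∏ i, A i = A i₀ * ∏ i ∈ Finset.univ.erase i₀, A i :=
      (Finset.mul_prod_erase Finset.univ A (Finset.mem_univ i₀)).symm
    have hjmem : j ∈ Finset.univ.erase i₀ := Finset.mem_erase.mpr ⟨hj, Finset.mem_univ j⟩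
    have h2 : A j ∣ ∏ i ∈ Finset.univ.erase i₀, A i := Finset.dvd_prod_of_mem A hjmem
    rw [hprod, sq]
    exact mul_dvd_mul hAi₀ (hdvdj.trans h2)
  -- write A i₀ = p * u with p ∤ u
  obtain ⟨u, hu⟩ := hAi₀
  have hpu : ¬ (p : ℤ) ∣ u := by
    intro hdvdu
    apply hsq
    have h1 : (p : ℤ) ^ 2 ∣ A i₀ := by
      rw [hu, sq]
      exact mul_dvd_mul_left _ hdvdu
    exact h1.trans (Finset.dvd_prod_of_mem A (Finset.mem_univ i₀))
  -- key: the inner product is qc(a) * C for some constant C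
  obtain ⟨s, rfl⟩ : ∃ s, r = s + 1 := ⟨r - 1, by omega⟩
  have key : ∃ C : ℂ, ∀ a : ℕ, ¬ (p : ℤ) ∣ (a : ℤ) →
      ∏ i, Gs p ((a : ℤ) * A i) (s + 1) = qc p ((a : ℕ) : ZMod p) * C := by
    have hprod : ∀ a : ℕ, ∏ i, Gs p ((a : ℤ) * A i) (s+1)
        = Gs p ((a : ℤ) * A i₀) (s+1) * ∏ i ∈ Finset.univ.erase i₀, Gs p ((a : ℤ) * A i) (s+1) :=
      fun a => (Finset.mul_prod_erase Finset.univ _ (Finset.mem_univ i₀)).symm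
    have hcard : (Finset.univ.erase i₀).card = 3 := by
      rw [Finset.card_erase_of_mem (Finset.mem_univ i₀)]
      simp
    -- facts for a coprime to p
    have hqc_ne : ∀ a : ℕ, ¬ (p : ℤ) ∣ (a : ℤ) → ((a : ℤ) : ZMod p) ≠ 0 := by
      intro a ha
      rw [Ne, ZMod.intCast_zmod_eq_zero_iff_dvd]
      exact ha
    have hnd : ∀ a : ℕ, ¬ (p : ℤ) ∣ (a : ℤ) → ∀ j, j ≠ i₀ → ¬ (p : ℤ) ∣ ((a : ℤ) * A j) := by
      intro a ha j hj h
      rcases Int.Prime.dvd_mul' hp h with h' | h'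
      · exact ha h'
      · exact hothers j hj h'
    have hndu : ∀ a : ℕ, ¬ (p : ℤ) ∣ (a : ℤ) → ¬ (p : ℤ) ∣ ((a : ℤ) * u) := by
      intro a ha h
      rcases Int.Prime.dvd_mul' hp h with h' | h'
      · exact ha h'
      · exact hpu h'
    have hspecial : ∀ a : ℕ, (a : ℤ) * A i₀ = (p : ℤ) * ((a : ℤ) * u) := by
      intro a; rw [hu]; ring
    rcases Nat.even_or_odd s with ⟨j, hj⟩ | ⟨j, hj⟩
    · -- s = 2j, r = 2j+1 odd
      have hs : s = 2 * j := by omega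
      refine ⟨(p : ℂ) ^ (j + 1) * ((p : ℂ) ^ j * Tp p) ^ 3 *
        ∏ i ∈ Finset.univ.erase i₀, qc p ((A i : ZMod p)), ?_⟩
      intro a ha
      have hae : ((a : ℤ) : ZMod p) = ((a : ℕ) : ZMod p) := by push_cast; rfl
      rw [hprod a]
      -- special factor
      have hsp : Gs p ((a : ℤ) * A i₀) (s+1) = (p : ℂ) ^ (j + 1) := by
        rw [hspecial a, show s + 1 = s + 1 from rfl, Gs_p hp.ne_zero, hs,
          Gs_even hp hodd (hndu a ha) j]
        ring
      -- other factors
      have hof : ∀ i ∈ Finset.univ.erase i₀, Gs p ((a : ℤ) * A i) (s+1)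
          = ((p : ℂ) ^ j * Tp p * qc p ((a : ℕ) : ZMod p)) * qc p ((A i : ZMod p)) := by
        intro i hi
        have hi' : i ≠ i₀ := (Finset.mem_erase.mp hi).1
        rw [hs, Gs_odd hp hodd (hnd a ha i hi') j, Gs_one_eval hp hodd (hnd a ha i hi')]
        have : (((a : ℤ) * A i : ℤ) : ZMod p) = ((a : ℕ) : ZMod p) * ((A i : ZMod p)) := by
          push_cast; rfl
        rw [this, qc_mul]
        ring
      rw [Finset.prod_congr rfl hof, Finset.prod_mul_distrib, Finset.prod_const, hcard, hsp]
      have hqc3 : ((p : ℂ) ^ j * Tp p * qc p ((a : ℕ) : ZMod p)) ^ 3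
          = qc p ((a : ℕ) : ZMod p) * ((p : ℂ) ^ j * Tp p) ^ 3 := by
        have h2 : qc p ((a : ℕ) : ZMod p) * qc p ((a : ℕ) : ZMod p) = 1 := by
          have := qc_sq_one (p := p) (a := ((a : ℕ) : ZMod p)) (by rw [← hae]; exact hqc_ne a ha)
          exact this
        linear_combination (((p : ℂ) ^ j * Tp p) ^ 3 * qc p ((a : ℕ) : ZMod p)) * h2
      rw [hqc3]
      ring
    · -- s = 2j+1, r = 2j+2 even
      refine ⟨qc p ((u : ZMod p)) * Tp p * (p : ℂ) ^ (j + 1) * ((p : ℂ) ^ (j + 1)) ^ 3, ?_⟩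
      intro a ha
      have hae : ((a : ℤ) : ZMod p) = ((a : ℕ) : ZMod p) := by push_cast; rfl
      rw [hprod a]
      have hsp : Gs p ((a : ℤ) * A i₀) (s+1)
          = (p : ℂ) ^ (j + 1) * (qc p ((a : ℕ) : ZMod p) * qc p ((u : ZMod p)) * Tp p) := by
        rw [hspecial a, Gs_p hp.ne_zero, hj, Gs_odd hp hodd (hndu a ha) j,
          Gs_one_eval hp hodd (hndu a ha)]
        have : (((a : ℤ) * u : ℤ) : ZMod p) = ((a : ℕ) : ZMod p) * ((u : ZMod p)) := by
          push_cast; rfl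
        rw [this, qc_mul]
        ring
      have hof : ∀ i ∈ Finset.univ.erase i₀, Gs p ((a : ℤ) * A i) (s+1) = (p : ℂ) ^ (j + 1) := by
        intro i hi
        have hi' : i ≠ i₀ := (Finset.mem_erase.mp hi).1
        have : s + 1 = 2 * (j + 1) := by omega
        rw [this, Gs_even hp hodd (hnd a ha i hi')]
      rw [Finset.prod_congr rfl hof, Finset.prod_const, hcard, hsp]
      ring
  obtain ⟨C, hC⟩ := key
  rw [Sq_factor]
  have hrw : ∀ a ∈ (Finset.range (p^(s+1))).filter (fun a => Nat.gcd a (p^(s+1)) = 1),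
      ∏ i, Gs p ((a : ℤ) * A i) (s+1) = qc p ((a : ℕ) : ZMod p) * C := by
    intro a hamem
    simp only [Finset.mem_filter] at hamem
    apply hC
    intro hdvda
    have hpa : p ∣ a := by exact_mod_cast hdvda
    have : Nat.gcd a (p^(s+1)) = 1 := hamem.2
    have hpgcd : p ∣ Nat.gcd a (p^(s+1)) := Nat.dvd_gcd hpa (dvd_pow_self p (by omega))
    rw [this] at hpgcd
    have h1 := Nat.le_of_dvd one_pos hpgcd
    have := hp.two_le
    omega
  rw [Finset.sum_congr rfl hrw, ← Finset.sum_mul, char_sum_zero hp hodd (by omega : 1 ≤ s + 1),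
    zero_mul]
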